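/- arXiv:2501.11400 — 2 statements merged into one kernel-verified Lean document; each statement's English description precedes it below -/
import Mathlib

section
/- Let (l_j) be a sequence of positive reals and (φ_j) a sequence of reals, and let m < n be natural numbers. For any permutation σ of the index set {m+1, …, n}, one has (1/2)·Σ_{j,k=m+1}^n l_j l_k sin²(φ_j − φ_k) ≥ (1/8)·( Σ_{j=m+1}^n min{l_j, l_{σ(j)}} · |sin(φ_j − φ_{σ(j)})| )². -/
lemma abs_sin_triangle (a b c : ℝ) :
    |Real.sin (a - c)| ≤ |Real.sin (a - b)| + |Real.sin (b - c)| := by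
  have h : a - c = (a - b) + (b - c) := by ring
  rw [h, Real.sin_add]
  refine (abs_add_le _ _).trans ?_
  rw [abs_mul, abs_mul]
  have h1 := Real.abs_cos_le_one (b - c)
  have h2 := Real.abs_cos_le_one (a - b)
  have h3 := abs_nonneg (Real.sin (a - b))
  have h4 := abs_nonneg (Real.sin (b - c))
  have h5 := abs_nonneg (Real.cos (a - b))
  have h6 := abs_nonneg (Real.cos (b - c))
  nlinarith

lemma det_lower_bound_aux (l : ℕ → ℝ) (A : ℕ → ℕ → ℝ) (I : Finset ℕ)
    (σ : Equiv.Perm ℕ)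
    (hl : ∀ j, 0 < l j) (hAnn : ∀ j k, 0 ≤ A j k)
    (hAsymm : ∀ j k, A j k = A k j)
    (hAtri : ∀ j k p, A j k ≤ A j p + A p k)
    (hσ : ∀ j ∈ I, σ j ∈ I) :
    (∑ j ∈ I, min (l j) (l (σ j)) * A j (σ j)) ^ 2
      ≤ 4 * ∑ j ∈ I, ∑ k ∈ I, l j * l k * A j k ^ 2 := by
  have himg : I.image σ = I := by
    apply Finset.eq_of_subset_of_card_le
    · intro x hx
      obtain ⟨y, hy, rfl⟩ := Finset.mem_image.1 hx
      exact hσ y hy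
    · rw [Finset.card_image_of_injective _ σ.injective]
  have reindex : ∀ f : ℕ → ℝ, ∑ j ∈ I, f (σ j) = ∑ j ∈ I, f j := by
    intro f
    conv_rhs => rw [← himg]
    rw [Finset.sum_image (fun x _ y _ h => σ.injective h)]
  set S := ∑ j ∈ I, min (l j) (l (σ j)) * A j (σ j) with hS
  set D := ∑ j ∈ I, ∑ k ∈ I, l j * l k * A j k ^ 2 with hD
  have hmnn : ∀ j : ℕ, 0 ≤ min (l j) (l (σ j)) :=
    fun j => le_min (hl j).le (hl _).le
  -- Step 1: for every k, S ≤ 2 * ∑ p ∈ I, l p * A p k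
  have key1 : ∀ k : ℕ, S ≤ 2 * ∑ p ∈ I, l p * A p k := by
    intro k
    have h1 : S ≤ ∑ j ∈ I, (l j * A j k + l (σ j) * A (σ j) k) := by
      apply Finset.sum_le_sum
      intro j _
      have ht : A j (σ j) ≤ A j k + A k (σ j) := hAtri j (σ j) k
      have hm1 : min (l j) (l (σ j)) ≤ l j := min_le_left _ _
      have hm2 : min (l j) (l (σ j)) ≤ l (σ j) := min_le_right _ _
      have hsy : A k (σ j) = A (σ j) k := hAsymm k (σ j)
      have h01 := hAnn j k
      have h02 := hAnn (σ j) k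
      have h03 := hmnn j
      nlinarith
    refine h1.trans ?_
    rw [Finset.sum_add_distrib, reindex (fun p => l p * A p k)]
    ring_nf
    nlinarith [Finset.sum_nonneg (fun p (_ : p ∈ I) => mul_nonneg (hl p).le (hAnn p k))]
  -- Step 2: S^2 ≤ 4 * D
  have h0 : S ^ 2 = ∑ k ∈ I, (min (l k) (l (σ k)) * A k (σ k)) * S := by
    rw [← Finset.sum_mul]; ring
  have h1 : S ^ 2 ≤ ∑ k ∈ I, (min (l k) (l (σ k)) * A k (σ k)) *
      (2 * ∑ p ∈ I, l p * A p k) := by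
    rw [h0]
    apply Finset.sum_le_sum
    intro k _
    exact mul_le_mul_of_nonneg_left (key1 k) (mul_nonneg (hmnn k) (hAnn _ _))
  have h2 : ∀ k ∈ I, (min (l k) (l (σ k)) * A k (σ k)) * (2 * ∑ p ∈ I, l p * A p k)
      ≤ ∑ p ∈ I, (3 * (l k * l p * A k p ^ 2) + l (σ k) * l p * A (σ k) p ^ 2) := by
    intro k _
    have hrw : (min (l k) (l (σ k)) * A k (σ k)) * (2 * ∑ p ∈ I, l p * A p k)
        = ∑ p ∈ I, 2 * (min (l k) (l (σ k)) * A k (σ k)) * (l p * A p k) := by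
      simp only [Finset.mul_sum]
      apply Finset.sum_congr rfl
      intro p _
      ring
    rw [hrw]
    apply Finset.sum_le_sum
    intro p _
    have ht : A k (σ k) ≤ A k p + A p (σ k) := hAtri k (σ k) p
    have hsy1 : A p k = A k p := hAsymm p k
    have hsy2 : A p (σ k) = A (σ k) p := hAsymm p (σ k)
    have hm1 : min (l k) (l (σ k)) ≤ l k := min_le_left _ _
    have hm2 : min (l k) (l (σ k)) ≤ l (σ k) := min_le_right _ _
    have h01 := hAnn k p
    have h02 := hAnn p (σ k)
    have h03 := hAnn k (σ k)
    have h04 := hmnn k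
    have h05 := (hl p).le
    rw [hsy1, ← hsy2]
    nlinarith [mul_nonneg (mul_nonneg (mul_nonneg h04 h05) h01)
        (by linarith : (0:ℝ) ≤ A k p + A p (σ k) - A k (σ k)),
      mul_nonneg (mul_nonneg h04 h05) (sq_nonneg (A k p - A p (σ k))),
      mul_nonneg (mul_nonneg (sub_nonneg.2 hm1) h05) (sq_nonneg (A k p)),
      mul_nonneg (mul_nonneg (sub_nonneg.2 hm2) h05) (sq_nonneg (A p (σ k)))]
  have h3 : ∑ k ∈ I, ∑ p ∈ I, (3 * (l k * l p * A k p ^ 2)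
      + l (σ k) * l p * A (σ k) p ^ 2) = 4 * D := by
    have e1 : ∑ k ∈ I, ∑ p ∈ I, 3 * (l k * l p * A k p ^ 2) = 3 * D := by
      rw [hD, Finset.mul_sum]
      apply Finset.sum_congr rfl
      intro k _
      rw [Finset.mul_sum]
    have e2 : ∑ k ∈ I, ∑ p ∈ I, l (σ k) * l p * A (σ k) p ^ 2 = D := by
      rw [hD]
      exact reindex (fun k => ∑ p ∈ I, l k * l p * A k p ^ 2)
    calc ∑ k ∈ I, ∑ p ∈ I, (3 * (l k * l p * A k p ^ 2) + l (σ k) * l p * A (σ k) p ^ 2)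
        = (∑ k ∈ I, ∑ p ∈ I, 3 * (l k * l p * A k p ^ 2))
          + ∑ k ∈ I, ∑ p ∈ I, l (σ k) * l p * A (σ k) p ^ 2 := by
          rw [← Finset.sum_add_distrib]
          exact Finset.sum_congr rfl fun k _ => Finset.sum_add_distrib
      _ = 3 * D + D := by rw [e1, e2]
      _ = 4 * D := by ring
  calc S ^ 2 ≤ _ := h1
    _ ≤ ∑ k ∈ I, ∑ p ∈ I, (3 * (l k * l p * A k p ^ 2)
        + l (σ k) * l p * A (σ k) p ^ 2) := Finset.sum_le_sum h2
    _ = 4 * D := h3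

theorem det_lower_bound (l φ : ℕ → ℝ) (hl : ∀ j, 0 < l j)
    (m n : ℕ) (hmn : m < n) (σ : Equiv.Perm ℕ)
    (hσ : ∀ j ∈ Finset.Ioc m n, σ j ∈ Finset.Ioc m n) :
    (1 / 2) * ∑ j ∈ Finset.Ioc m n, ∑ k ∈ Finset.Ioc m n,
        l j * l k * Real.sin (φ j - φ k) ^ 2
      ≥ (1 / 8) * (∑ j ∈ Finset.Ioc m n,
          min (l j) (l (σ j)) * |Real.sin (φ j - φ (σ j))|) ^ 2 := by
  have key : (∑ j ∈ Finset.Ioc m n,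
        min (l j) (l (σ j)) * |Real.sin (φ j - φ (σ j))|) ^ 2
      ≤ 4 * ∑ j ∈ Finset.Ioc m n, ∑ k ∈ Finset.Ioc m n,
        l j * l k * |Real.sin (φ j - φ k)| ^ 2 :=
    det_lower_bound_aux l (fun j k => |Real.sin (φ j - φ k)|)
    (Finset.Ioc m n) σ hl
    (fun j k => abs_nonneg _)
    (fun j k => by
      show |Real.sin (φ j - φ k)| = |Real.sin (φ k - φ j)|
      rw [show φ j - φ k = -(φ k - φ j) by ring, Real.sin_neg, abs_neg])
    (fun j k p => abs_sin_triangle _ _ _) hσ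
  have hrw : (∑ j ∈ Finset.Ioc m n, ∑ k ∈ Finset.Ioc m n,
      l j * l k * Real.sin (φ j - φ k) ^ 2)
      = ∑ j ∈ Finset.Ioc m n, ∑ k ∈ Finset.Ioc m n,
        l j * l k * |Real.sin (φ j - φ k)| ^ 2 :=
    Finset.sum_congr rfl fun j _ => Finset.sum_congr rfl fun k _ => by rw [sq_abs]
  rw [ge_iff_le, hrw]
  linarith
end

section
/- Let (l_j) be a sequence of positive reals, (φ_j) a sequence of reals, and m < n. Then (1/2)·Σ_{j,k=m+1}^n l_j l_k sin²(φ_j − φ_k) ≥ (1/4)·(Σ_{k=m+1}^n l_k)·(Σ_{j=m+1}^n min{l_j, l_{σ(j)}}·sin²(φ_j − φ_{σ(j)})) for any permutation σ of {m+1,…,n}. -/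
theorem det_lower_bound_intermediate (l φ : ℕ → ℝ) (hl : ∀ j, 0 < l j)
    (m n : ℕ) (hmn : m < n) (σ : Equiv.Perm ℕ)
    (hσ : ∀ j ∈ Finset.Ioc m n, σ j ∈ Finset.Ioc m n) :
    (1 / 2) * ∑ j ∈ Finset.Ioc m n, ∑ k ∈ Finset.Ioc m n,
        l j * l k * Real.sin (φ j - φ k) ^ 2
      ≥ (1 / 4) * (∑ k ∈ Finset.Ioc m n, l k) *
          (∑ j ∈ Finset.Ioc m n,
            min (l j) (l (σ j)) * Real.sin (φ j - φ (σ j)) ^ 2) := by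
  set s : Finset ℕ := Finset.Ioc m n with hs
  have hne : s.Nonempty := ⟨n, by simp [hs, Finset.mem_Ioc, hmn]⟩
  set L : ℝ := ∑ k ∈ s, l k with hL
  have hLpos : 0 < L := Finset.sum_pos (fun i _ => hl i) hne
  set C : ℝ := ∑ k ∈ s, l k * Real.cos (2 * φ k) with hC
  set Sn : ℝ := ∑ k ∈ s, l k * Real.sin (2 * φ k) with hSn
  set μc : ℝ := C / L with hμc
  set μs : ℝ := Sn / L with hμs
  set g : ℕ → ℝ := fun j =>
    l j * ((Real.cos (2 * φ j) - μc) ^ 2 + (Real.sin (2 * φ j) - μs) ^ 2) with hg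
  -- reindexing along σ
  have himg : s.image σ = s := by
    apply Finset.eq_of_subset_of_card_le
    · intro x hx
      obtain ⟨y, hy, rfl⟩ := Finset.mem_image.mp hx
      exact hσ y hy
    · rw [Finset.card_image_of_injective _ σ.injective]
  have hreidx : ∀ f : ℕ → ℝ, ∑ j ∈ s, f (σ j) = ∑ j ∈ s, f j := by
    intro f
    rw [← Finset.sum_image (fun x _ y _ h => σ.injective h), himg]
  have hsin : ∀ j k : ℕ, Real.sin (φ j - φ k) ^ 2
      = 1/2 - (Real.cos (2*φ j) * Real.cos (2*φ k)
          + Real.sin (2*φ j) * Real.sin (2*φ k))/2 := by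
    intro j k
    have h1 : Real.sin (φ j - φ k) ^ 2 = 1/2 - Real.cos (2*(φ j - φ k))/2 := by
      have ha := Real.cos_sq (φ j - φ k)
      have hb := Real.sin_sq (φ j - φ k)
      linarith
    have h2 : (2:ℝ)*(φ j - φ k) = 2*φ j - 2*φ k := by ring
    rw [h1, h2, Real.cos_sub]
  have hdouble : ∑ j ∈ s, ∑ k ∈ s, l j * l k * Real.sin (φ j - φ k) ^ 2
      = (L*L - C*C - Sn*Sn)/2 := by
    have key : ∀ j ∈ s, ∑ k ∈ s, l j * l k * Real.sin (φ j - φ k) ^ 2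
        = (l j * L - (l j * Real.cos (2*φ j)) * C
            - (l j * Real.sin (2*φ j)) * Sn)/2 := by
      intro j _
      rw [hL, hC, hSn, Finset.mul_sum, Finset.mul_sum, Finset.mul_sum,
        ← Finset.sum_sub_distrib, ← Finset.sum_sub_distrib, Finset.sum_div]
      refine Finset.sum_congr rfl fun k _ => ?_
      rw [hsin j k]; ring
    rw [Finset.sum_congr rfl key, ← Finset.sum_div,
      Finset.sum_sub_distrib, Finset.sum_sub_distrib,
      ← Finset.sum_mul, ← Finset.sum_mul, ← Finset.sum_mul, ← hL, ← hC, ← hSn]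
  have hgsum : ∑ j ∈ s, g j = L - (C*C + Sn*Sn)/L := by
    have key : ∀ j, g j = l j * (1 + μc^2 + μs^2)
        - 2*μc*(l j * Real.cos (2*φ j)) - 2*μs*(l j * Real.sin (2*φ j)) := by
      intro j
      have hp := Real.sin_sq_add_cos_sq (2*φ j)
      simp only [hg]
      linear_combination (l j) * hp
    simp only [key]
    rw [Finset.sum_sub_distrib, Finset.sum_sub_distrib,
      ← Finset.sum_mul, ← Finset.mul_sum, ← Finset.mul_sum, ← hL, ← hC, ← hSn,
      hμc, hμs]
    field_simp
    ring
  have hpt : ∀ j : ℕ, min (l j) (l (σ j)) * Real.sin (φ j - φ (σ j)) ^ 2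
      ≤ (g j + g (σ j))/2 := by
    intro j
    have hpj := Real.sin_sq_add_cos_sq (2*φ j)
    have hpk := Real.sin_sq_add_cos_sq (2*φ (σ j))
    have hm1 : min (l j) (l (σ j)) ≤ l j := min_le_left _ _
    have hm2 : min (l j) (l (σ j)) ≤ l (σ j) := min_le_right _ _
    have hm0 : 0 ≤ min (l j) (l (σ j)) := le_of_lt (lt_min (hl _) (hl _))
    simp only [hg]
    rw [hsin j (σ j)]
    nlinarith [mul_nonneg hm0 (sq_nonneg ((Real.cos (2*φ j) - μc) + (Real.cos (2*φ (σ j)) - μc))),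
      mul_nonneg hm0 (sq_nonneg ((Real.sin (2*φ j) - μs) + (Real.sin (2*φ (σ j)) - μs))),
      mul_nonneg (sub_nonneg.2 hm1) (sq_nonneg (Real.cos (2*φ j) - μc)),
      mul_nonneg (sub_nonneg.2 hm1) (sq_nonneg (Real.sin (2*φ j) - μs)),
      mul_nonneg (sub_nonneg.2 hm2) (sq_nonneg (Real.cos (2*φ (σ j)) - μc)),
      mul_nonneg (sub_nonneg.2 hm2) (sq_nonneg (Real.sin (2*φ (σ j)) - μs)),
      hpj, hpk]
  have hT : ∑ j ∈ s, min (l j) (l (σ j)) * Real.sin (φ j - φ (σ j)) ^ 2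
      ≤ ∑ j ∈ s, g j := by
    calc ∑ j ∈ s, min (l j) (l (σ j)) * Real.sin (φ j - φ (σ j)) ^ 2
        ≤ ∑ j ∈ s, (g j + g (σ j))/2 := Finset.sum_le_sum (fun j _ => hpt j)
      _ = ∑ j ∈ s, g j := by
          rw [← Finset.sum_div, Finset.sum_add_distrib, hreidx g]
          ring
  rw [ge_iff_le, hdouble]
  calc (1/4) * L * (∑ j ∈ s, min (l j) (l (σ j)) * Real.sin (φ j - φ (σ j)) ^ 2)
      ≤ (1/4) * L * (∑ j ∈ s, g j) := by
        apply mul_le_mul_of_nonneg_left hT (by positivity)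
    _ = (1/2) * ((L*L - C*C - Sn*Sn)/2) := by
        rw [hgsum]; field_simp; ring
end
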